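/- arXiv:2102.09851 — 3 statements merged into one kernel-verified Lean document; each statement's English description precedes it below -/
import Mathlib

section
/- Let d > 0 and let b, σ be real numbers with b ≠ 0 and σ ≠ 0. Let (a_n) be the sequence defined by a_0 = 1 and a_{n+1} = a_n − (d/a_n)(b/σ)². Then there exists an integer n ≥ 0 such that a_0, a_1, …, a_n are all positive and a_{n+1} ≤ 0; moreover the smallest such n satisfies n ≤ σ²/(d·b²). In particular the quantity N(d, b, σ) := inf { n ≥ 0 : a_0, …, a_n > 0 and a_{n+1} ≤ 0 } is a well-defined finite natural number. -/
/-! While `0 < a n ≤ 1`, the step `c / a n` is at least `c`, so the sequence loses at least `c`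
at every step and `a n ≤ a 0 - n c` as long as it stays positive. Hence it cannot stay positive
past `n c < a 0 ≤ 1`, i.e. `n < σ² / (d b²)` for `c = d (b / σ)²`. -/

theorem exists_first_nonpos_succ {K : Type*} [LinearOrder K] [Zero K] {a : ℕ → K}
    (ha0 : 0 < a 0) (h : ∃ n, a (n + 1) ≤ 0) :
    ∃ n, (∀ k ≤ n, 0 < a k) ∧ a (n + 1) ≤ 0 ∧
      ∀ m, ((∀ k ≤ m, 0 < a k) ∧ a (m + 1) ≤ 0) → n ≤ m := by
  classical
  refine ⟨Nat.find h, ?_, Nat.find_spec h, fun m hm => Nat.find_min' h hm.2⟩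
  rintro (_ | j) hj
  · exact ha0
  · exact not_le.mp (Nat.find_min h (Nat.lt_of_succ_le hj))

section SubDivRecurrence

variable {K : Type*} [Field K] [LinearOrder K] [IsStrictOrderedRing K]
  {a : ℕ → K} {c : K} (hrec : ∀ n, a (n + 1) = a n - c / a n)
include hrec

theorem le_sub_natCast_mul_of_forall_lt_pos (ha0 : a 0 ≤ 1) (hc : 0 ≤ c) {n : ℕ}
    (hpos : ∀ k < n, 0 < a k) : a n ≤ a 0 - n * c := by
  induction n with
  | zero => simp
  | succ m ih =>
    have ham : a m ≤ a 0 - m * c := ih fun k hk => hpos k (hk.trans m.lt_succ_self)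
    have hm_pos : 0 < a m := hpos m m.lt_succ_self
    have hm_le_one : a m ≤ 1 := by
      have : 0 ≤ (m : K) * c := by positivity
      linarith
    have hstep : c ≤ c / a m := le_div_self hc hm_pos hm_le_one
    rw [hrec m]
    push_cast
    linarith

theorem nat_mul_lt_of_forall_le_pos (ha0 : a 0 ≤ 1) (hc : 0 ≤ c) {n : ℕ}
    (hpos : ∀ k ≤ n, 0 < a k) : n * c < a 0 := by
  have := le_sub_natCast_mul_of_forall_lt_pos hrec ha0 hc fun k hk => hpos k hk.le
  linarith [hpos n le_rfl]

theorem exists_nonpos_succ [Archimedean K] (ha0 : 0 < a 0) (ha0' : a 0 ≤ 1) (hc : 0 < c) :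
    ∃ n, a (n + 1) ≤ 0 := by
  by_contra! hpos
  obtain ⟨n, hn⟩ := exists_nat_gt c⁻¹
  have hlt : n * c < a 0 :=
    nat_mul_lt_of_forall_le_pos hrec ha0' hc.le fun
      | 0, _ => ha0
      | k + 1, _ => hpos k
  have : 1 < n * c := by rwa [inv_lt_iff_one_lt_mul₀ hc] at hn
  linarith

end SubDivRecurrence

/-- For the sequence `a 0 = 1`, `a (n+1) = a n - (d / a n) * (b/σ)^2`
(with `d > 0`, `b ≠ 0`, `σ ≠ 0`), there is a first index `n` at which the sequence,
having stayed positive up to `n`, drops to a nonpositive value at `n+1`; moreover this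
smallest `n` satisfies `n ≤ σ² / (d b²)`.  In particular `N(d,b,σ)` is a well-defined
finite natural number. -/
theorem stmt_1 (d b σ : ℝ) (hd : 0 < d) (hb : b ≠ 0) (hσ : σ ≠ 0)
    (a : ℕ → ℝ) (ha0 : a 0 = 1)
    (harec : ∀ n : ℕ, a (n + 1) = a n - (d / a n) * (b / σ) ^ 2) :
    ∃ n : ℕ, (∀ k ≤ n, 0 < a k) ∧ a (n + 1) ≤ 0 ∧
      (n : ℝ) ≤ σ ^ 2 / (d * b ^ 2) ∧
      ∀ m : ℕ, ((∀ k ≤ m, 0 < a k) ∧ a (m + 1) ≤ 0) → n ≤ m := by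
  set c := d * (b / σ) ^ 2 with hc_def
  have hc : 0 < c := by positivity
  have hrec : ∀ n, a (n + 1) = a n - c / a n := fun n => by
    rw [harec n, div_mul_eq_mul_div]
  have ha0_pos : 0 < a 0 := ha0 ▸ one_pos
  obtain ⟨n, hpos, hdrop, hmin⟩ :=
    exists_first_nonpos_succ ha0_pos (exists_nonpos_succ hrec ha0_pos ha0.le hc)
  refine ⟨n, hpos, hdrop, ?_, hmin⟩
  have hnc : n * c < 1 := ha0 ▸ nat_mul_lt_of_forall_le_pos hrec ha0.le hc.le hpos
  rw [le_div_iff₀ (by positivity)]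
  calc (n : ℝ) * (d * b ^ 2) = n * c * σ ^ 2 := by rw [hc_def]; field_simp
    _ ≤ σ ^ 2 := (mul_lt_of_lt_one_left (by positivity) hnc).le
end

section
/- Fix reals b, σ with σ ≠ 0, d > 0 and T ≥ 2d. There exists τ̃ ∈ (0, d] such that for every τ ∈ (0, τ̃], the operator φ = (φ₁, φ₂, φ₃) maps the ball B_τ into itself. -/
/-!
Write `ε = τ / σ²`. On `D_τ` the ball gives `|ξ₂| ≤ 3|b|/2` and `|ξ₃| ≤ 3b²/2`, and every
integral in `φ` runs over a window `[t, min (T - d) (t + s + d)]` of length at most `τ` on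
which the integrand only evaluates `ξ₂, ξ₃` at points of `D_τ`. Since
`φ₂ - b = b (φ₁ - 1) - σ⁻² ∫ …` and `φ₃ - b² = b (φ₂ - b) - σ⁻² ∫ …`, the three deviations
are at most `(9/4) b² ε`, `(9/2) |b|³ ε` and `(27/4) b⁴ ε`, which fit in the radii
`1/2, |b|/2, b²/2` once `b² ε ≤ 1/14`. For continuity, extend `ξ₂, ξ₃` continuously off the
closed set `D_τ` (Tietze): this does not change `φ` on `D_τ`, and parametric interval
integrals of continuous integrands are continuous.
-/

open Set MeasureTheory

/-- First component of the fixed-point operator `φ`. -/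
noncomputable def phi1 (σ T d : ℝ) (ξ₂ : ℝ → ℝ → ℝ) (t : ℝ) : ℝ :=
  1 - (σ ^ 2)⁻¹ * ∫ x in t..(T - d), (ξ₂ x 0) ^ 2

/-- Second component of the fixed-point operator `φ`. -/
noncomputable def phi2 (b σ T d : ℝ) (ξ₂ : ℝ → ℝ → ℝ) (ξ₃ : ℝ → ℝ → ℝ → ℝ) (t s : ℝ) : ℝ :=
  b * phi1 σ T d ξ₂ (min (T - d) (t + s + d)) -
    (σ ^ 2)⁻¹ * ∫ x in t..(min (T - d) (t + s + d)), ξ₂ x 0 * ξ₃ x (t + s - x) 0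

/-- Third component of the fixed-point operator `φ`. -/
noncomputable def phi3 (b σ T d : ℝ) (ξ₂ : ℝ → ℝ → ℝ) (ξ₃ : ℝ → ℝ → ℝ → ℝ) (t s r : ℝ) : ℝ :=
  b * phi2 b σ T d ξ₂ ξ₃ (min (T - d) (t + min s r + d)) (|s - r| - d) -
    (σ ^ 2)⁻¹ * ∫ x in t..(min (T - d) (t + min s r + d)),
      ξ₃ x (t + s - x) 0 * ξ₃ x 0 (t + r - x)

/-- Membership in the ball `B_τ`: a triple of functions, continuous on the domain
`D_τ = [T-d-τ, T-d] × [-d,0]²`, satisfying `‖ξ₁ - 1‖_∞ ≤ 1/2`, `‖ξ₂ - b‖_∞ ≤ |b|/2`,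
`‖ξ₃ - b²‖_∞ ≤ b²/2`. -/
def memBall (b T d τ : ℝ) (ξ₁ : ℝ → ℝ) (ξ₂ : ℝ → ℝ → ℝ) (ξ₃ : ℝ → ℝ → ℝ → ℝ) : Prop :=
  ContinuousOn ξ₁ (Icc (T - d - τ) (T - d)) ∧
  ContinuousOn (fun p : ℝ × ℝ => ξ₂ p.1 p.2) (Icc (T - d - τ) (T - d) ×ˢ Icc (-d) 0) ∧
  ContinuousOn (fun p : ℝ × ℝ × ℝ => ξ₃ p.1 p.2.1 p.2.2)
    (Icc (T - d - τ) (T - d) ×ˢ Icc (-d) 0 ×ˢ Icc (-d) 0) ∧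
  (∀ t ∈ Icc (T - d - τ) (T - d), |ξ₁ t - 1| ≤ 1 / 2) ∧
  (∀ t ∈ Icc (T - d - τ) (T - d), ∀ s ∈ Icc (-d) 0, |ξ₂ t s - b| ≤ |b| / 2) ∧
  (∀ t ∈ Icc (T - d - τ) (T - d), ∀ s ∈ Icc (-d) 0, ∀ r ∈ Icc (-d) 0,
    |ξ₃ t s r - b ^ 2| ≤ b ^ 2 / 2)

universe u v

@[fun_prop]
theorem continuous_parametric_intervalIntegral {X E : Type*} [TopologicalSpace X]
    [NormedAddCommGroup E] [NormedSpace ℝ E] {f : X → ℝ → E} (hf : Continuous f.uncurry)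
    {u v : X → ℝ} (hu : Continuous u) (hv : Continuous v) :
    Continuous fun p => ∫ x in u p..v p, f p x := by
  have hfi : ∀ p a b, IntervalIntegrable (f p) volume a b := fun p a b =>
    (hf.comp (Continuous.prodMk_right p)).intervalIntegrable a b
  have hv' : Continuous fun p => ∫ x in (0 : ℝ)..v p, f p x := by fun_prop
  have hu' : Continuous fun p => ∫ x in (0 : ℝ)..u p, f p x := by fun_prop
  refine (hv'.sub hu').congr fun p => ?_
  exact intervalIntegral.integral_interval_sub_left (hfi p _ _) (hfi p _ _)

theorem ContinuousOn.exists_continuous_eqOn {X : Type u} {Y : Type v} [TopologicalSpace X]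
    [NormalSpace X] [TopologicalSpace Y] [TietzeExtension.{u, v} Y] {s : Set X}
    (hs : IsClosed s) {f : X → Y} (hf : ContinuousOn f s) :
    ∃ g : X → Y, Continuous g ∧ EqOn g f s := by
  obtain ⟨g, hg⟩ := ContinuousMap.exists_restrict_eq hs ⟨s.domRestrict f, hf.domRestrict⟩
  exact ⟨g, g.continuous, fun x hx => congr($hg ⟨x, hx⟩)⟩

theorem abs_intervalIntegral_le_mul {f : ℝ → ℝ} {a b C τ : ℝ} (hab : a ≤ b) (hτ : b - a ≤ τ)
    (hf : ∀ x ∈ Icc a b, |f x| ≤ C) : |∫ x in a..b, f x| ≤ C * τ := by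
  have hC : 0 ≤ C := (abs_nonneg _).trans (hf a (left_mem_Icc.2 hab))
  calc |∫ x in a..b, f x| ≤ C * |b - a| :=
        intervalIntegral.norm_integral_le_of_norm_le_const fun x hx =>
          (Real.norm_eq_abs _).trans_le (hf x (Ioc_subset_Icc_self (uIoc_of_le hab ▸ hx)))
    _ ≤ C * τ := by rw [abs_of_nonneg (sub_nonneg.2 hab)]; gcongr

theorem abs_mul_sub_inv_mul_sub_mul_le {b u v I σ ε C τ : ℝ} (hu : |u - v| ≤ ε)
    (hI : |I| ≤ C * τ) : |b * u - (σ ^ 2)⁻¹ * I - b * v| ≤ |b| * ε + C * (τ / σ ^ 2) := by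
  calc |b * u - (σ ^ 2)⁻¹ * I - b * v| = |b * (u - v) - (σ ^ 2)⁻¹ * I| := by ring_nf
    _ ≤ |b * (u - v)| + |(σ ^ 2)⁻¹ * I| := abs_sub _ _
    _ = |b| * |u - v| + (σ ^ 2)⁻¹ * |I| := by
        rw [abs_mul, abs_mul, abs_of_nonneg (by positivity : (0 : ℝ) ≤ (σ ^ 2)⁻¹)]
    _ ≤ |b| * ε + (σ ^ 2)⁻¹ * (C * τ) := by gcongr
    _ = |b| * ε + C * (τ / σ ^ 2) := by ring

section Window

variable {T d τ t u s r x : ℝ}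

theorem left_le_min_add_add (ht : t ≤ T - d) (hu : -d ≤ u) : t ≤ min (T - d) (t + u + d) :=
  le_min ht (by linarith)

theorem min_add_add_mem_Icc (ht : t ∈ Icc (T - d - τ) (T - d)) (hu : -d ≤ u) :
    min (T - d) (t + u + d) ∈ Icc (T - d - τ) (T - d) :=
  ⟨ht.1.trans (left_le_min_add_add ht.2 hu), min_le_left _ _⟩

theorem add_sub_mem_Icc (hx : x ∈ Icc t (min (T - d) (t + u + d))) (hus : u ≤ s) (hs : s ≤ 0) :
    t + s - x ∈ Icc (-d) 0 :=
  ⟨by linarith [hx.2.trans (min_le_right _ _)], by linarith [hx.1]⟩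

theorem abs_sub_sub_mem_Icc (hs : s ∈ Icc (-d) 0) (hr : r ∈ Icc (-d) 0) :
    |s - r| - d ∈ Icc (-d) 0 := by
  have : |s - r| ≤ d := abs_le.2 ⟨by linarith [hs.1, hr.2], by linarith [hs.2, hr.1]⟩
  exact ⟨by linarith [abs_nonneg (s - r)], by linarith⟩

end Window

section Operator

variable {b σ T d τ t s r : ℝ} {ξ₂ η₂ : ℝ → ℝ → ℝ} {ξ₃ η₃ : ℝ → ℝ → ℝ → ℝ}

theorem phi1_congr (ht : t ≤ T - d) (h₂ : ∀ x ∈ Icc t (T - d), ξ₂ x 0 = η₂ x 0) :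
    phi1 σ T d ξ₂ t = phi1 σ T d η₂ t := by
  rw [phi1, phi1, intervalIntegral.integral_congr fun x hx => by
    rw [h₂ x (uIcc_of_le ht ▸ hx)]]

theorem phi2_congr (ht : t ∈ Icc (T - d - τ) (T - d)) (hs : s ∈ Icc (-d) 0)
    (h₂ : ∀ x ∈ Icc (T - d - τ) (T - d), ξ₂ x 0 = η₂ x 0)
    (h₃ : ∀ x ∈ Icc (T - d - τ) (T - d), ∀ y ∈ Icc (-d) 0, ξ₃ x y 0 = η₃ x y 0) :
    phi2 b σ T d ξ₂ ξ₃ t s = phi2 b σ T d η₂ η₃ t s := by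
  have hm := min_add_add_mem_Icc ht hs.1
  rw [phi2, phi2, phi1_congr hm.2 fun x hx => h₂ x (Icc_subset_Icc hm.1 le_rfl hx),
    intervalIntegral.integral_congr fun x hx => ?_]
  rw [uIcc_of_le (left_le_min_add_add ht.2 hs.1)] at hx
  simp only [h₂ x (Icc_subset_Icc ht.1 (min_le_left _ _) hx),
    h₃ x (Icc_subset_Icc ht.1 (min_le_left _ _) hx) _ (add_sub_mem_Icc hx le_rfl hs.2)]

theorem phi3_congr (hd : 0 ≤ d) (ht : t ∈ Icc (T - d - τ) (T - d)) (hs : s ∈ Icc (-d) 0)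
    (hr : r ∈ Icc (-d) 0) (h₂ : ∀ x ∈ Icc (T - d - τ) (T - d), ξ₂ x 0 = η₂ x 0)
    (h₃ : ∀ x ∈ Icc (T - d - τ) (T - d), ∀ y ∈ Icc (-d) 0, ∀ z ∈ Icc (-d) 0,
      ξ₃ x y z = η₃ x y z) :
    phi3 b σ T d ξ₂ ξ₃ t s r = phi3 b σ T d η₂ η₃ t s r := by
  have h0 : (0 : ℝ) ∈ Icc (-d) 0 := right_mem_Icc.2 (neg_nonpos.2 hd)
  have hsr : min s r ∈ Icc (-d) 0 := ⟨le_min hs.1 hr.1, (min_le_left _ _).trans hs.2⟩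
  rw [phi3, phi3, phi2_congr (min_add_add_mem_Icc ht hsr.1) (abs_sub_sub_mem_Icc hs hr) h₂
      fun x hx y hy => h₃ x hx y hy 0 h0,
    intervalIntegral.integral_congr fun x hx => ?_]
  rw [uIcc_of_le (left_le_min_add_add ht.2 hsr.1)] at hx
  have hxI := Icc_subset_Icc ht.1 (min_le_left _ _) hx
  simp only [h₃ x hxI _ (add_sub_mem_Icc hx (min_le_left s r) hs.2) 0 h0,
    h₃ x hxI 0 h0 _ (add_sub_mem_Icc hx (min_le_right s r) hr.2)]

theorem continuous_phi1 (h₂ : Continuous fun p : ℝ × ℝ => η₂ p.1 p.2) :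
    Continuous (phi1 σ T d η₂) := by
  unfold phi1
  fun_prop

theorem continuous_phi2 (h₂ : Continuous fun p : ℝ × ℝ => η₂ p.1 p.2)
    (h₃ : Continuous fun p : ℝ × ℝ × ℝ => η₃ p.1 p.2.1 p.2.2) :
    Continuous fun p : ℝ × ℝ => phi2 b σ T d η₂ η₃ p.1 p.2 := by
  have := continuous_phi1 (σ := σ) (T := T) (d := d) h₂
  unfold phi2
  fun_prop

theorem continuous_phi3 (h₂ : Continuous fun p : ℝ × ℝ => η₂ p.1 p.2)
    (h₃ : Continuous fun p : ℝ × ℝ × ℝ => η₃ p.1 p.2.1 p.2.2) :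
    Continuous fun p : ℝ × ℝ × ℝ => phi3 b σ T d η₂ η₃ p.1 p.2.1 p.2.2 := by
  have := continuous_phi2 (b := b) (σ := σ) (T := T) (d := d) h₂ h₃
  unfold phi3
  fun_prop

end Operator

section Bounds

variable {b σ T d τ t s r M₂ M₃ : ℝ} {ξ₂ : ℝ → ℝ → ℝ} {ξ₃ : ℝ → ℝ → ℝ → ℝ}

theorem abs_phi1_sub_one_le (ht : t ∈ Icc (T - d - τ) (T - d))
    (h₂ : ∀ x ∈ Icc (T - d - τ) (T - d), |ξ₂ x 0| ≤ M₂) :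
    |phi1 σ T d ξ₂ t - 1| ≤ M₂ ^ 2 * (τ / σ ^ 2) := by
  have hI : |∫ x in t..(T - d), ξ₂ x 0 ^ 2| ≤ M₂ ^ 2 * τ :=
    abs_intervalIntegral_le_mul ht.2 (by linarith [ht.1]) fun x hx => by
      rw [abs_pow]
      exact pow_le_pow_left₀ (abs_nonneg _) (h₂ x (Icc_subset_Icc ht.1 le_rfl hx)) 2
  calc |phi1 σ T d ξ₂ t - 1| = (σ ^ 2)⁻¹ * |∫ x in t..(T - d), ξ₂ x 0 ^ 2| := by
        rw [phi1, sub_sub_cancel_left, abs_neg, abs_mul, abs_of_nonneg (by positivity)]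
    _ ≤ (σ ^ 2)⁻¹ * (M₂ ^ 2 * τ) := by gcongr
    _ = M₂ ^ 2 * (τ / σ ^ 2) := by ring

theorem abs_phi2_sub_le (ht : t ∈ Icc (T - d - τ) (T - d)) (hs : s ∈ Icc (-d) 0)
    (h₂ : ∀ x ∈ Icc (T - d - τ) (T - d), |ξ₂ x 0| ≤ M₂)
    (h₃ : ∀ x ∈ Icc (T - d - τ) (T - d), ∀ y ∈ Icc (-d) 0, |ξ₃ x y 0| ≤ M₃) :
    |phi2 b σ T d ξ₂ ξ₃ t s - b| ≤ (|b| * M₂ ^ 2 + M₂ * M₃) * (τ / σ ^ 2) := by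
  have hm := left_le_min_add_add ht.2 hs.1
  have hI : |∫ x in t..min (T - d) (t + s + d), ξ₂ x 0 * ξ₃ x (t + s - x) 0| ≤ M₂ * M₃ * τ :=
    abs_intervalIntegral_le_mul hm (by linarith [ht.1, min_le_left (T - d) (t + s + d)])
      fun x hx => by
        have hxI := Icc_subset_Icc ht.1 (min_le_left _ _) hx
        rw [abs_mul]
        exact mul_le_mul (h₂ x hxI) (h₃ x hxI _ (add_sub_mem_Icc hx le_rfl hs.2))
          (abs_nonneg _) ((abs_nonneg _).trans (h₂ x hxI))
  have := abs_mul_sub_inv_mul_sub_mul_le (b := b) (v := 1) (σ := σ)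
    (abs_phi1_sub_one_le (σ := σ) (min_add_add_mem_Icc ht hs.1) h₂) hI
  rw [mul_one, ← phi2] at this
  linarith

theorem abs_phi3_sub_le (hd : 0 ≤ d) (ht : t ∈ Icc (T - d - τ) (T - d)) (hs : s ∈ Icc (-d) 0)
    (hr : r ∈ Icc (-d) 0) (h₂ : ∀ x ∈ Icc (T - d - τ) (T - d), |ξ₂ x 0| ≤ M₂)
    (h₃ : ∀ x ∈ Icc (T - d - τ) (T - d), ∀ y ∈ Icc (-d) 0, ∀ z ∈ Icc (-d) 0, |ξ₃ x y z| ≤ M₃) :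
    |phi3 b σ T d ξ₂ ξ₃ t s r - b ^ 2| ≤
      (|b| * (|b| * M₂ ^ 2 + M₂ * M₃) + M₃ ^ 2) * (τ / σ ^ 2) := by
  have h0 : (0 : ℝ) ∈ Icc (-d) 0 := right_mem_Icc.2 (neg_nonpos.2 hd)
  have hsr : min s r ∈ Icc (-d) 0 := ⟨le_min hs.1 hr.1, (min_le_left _ _).trans hs.2⟩
  have hm := left_le_min_add_add ht.2 hsr.1
  have hI : |∫ x in t..min (T - d) (t + min s r + d),
      ξ₃ x (t + s - x) 0 * ξ₃ x 0 (t + r - x)| ≤ M₃ ^ 2 * τ :=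
    abs_intervalIntegral_le_mul hm (by linarith [ht.1, min_le_left (T - d) (t + min s r + d)])
      fun x hx => by
        have hxI := Icc_subset_Icc ht.1 (min_le_left _ _) hx
        have hs' := h₃ x hxI _ (add_sub_mem_Icc hx (min_le_left s r) hs.2) 0 h0
        rw [abs_mul, sq]
        exact mul_le_mul hs' (h₃ x hxI 0 h0 _ (add_sub_mem_Icc hx (min_le_right s r) hr.2))
          (abs_nonneg _) ((abs_nonneg _).trans hs')
  have := abs_mul_sub_inv_mul_sub_mul_le (b := b) (v := b) (σ := σ)
    (abs_phi2_sub_le (σ := σ) (min_add_add_mem_Icc ht hsr.1) (abs_sub_sub_mem_Icc hs hr) h₂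
      fun x hx y hy => h₃ x hx y hy 0 h0) hI
  rw [← phi3, ← sq] at this
  linarith

end Bounds

theorem memBall_phi {b σ T d τ : ℝ} {ξ₁ : ℝ → ℝ} {ξ₂ : ℝ → ℝ → ℝ} {ξ₃ : ℝ → ℝ → ℝ → ℝ}
    (hd : 0 ≤ d) (hτ : b ^ 2 * (τ / σ ^ 2) ≤ 1 / 14) (h : memBall b T d τ ξ₁ ξ₂ ξ₃) :
    memBall b T d τ (phi1 σ T d ξ₂) (phi2 b σ T d ξ₂ ξ₃) (phi3 b σ T d ξ₂ ξ₃) := by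
  obtain ⟨-, h₂c, h₃c, -, h₂b, h₃b⟩ := h
  have h0 : (0 : ℝ) ∈ Icc (-d) 0 := right_mem_Icc.2 (neg_nonpos.2 hd)
  obtain ⟨η₂, hη₂c, hη₂⟩ := h₂c.exists_continuous_eqOn (isClosed_Icc.prod isClosed_Icc)
  obtain ⟨η₃, hη₃c, hη₃⟩ :=
    h₃c.exists_continuous_eqOn (isClosed_Icc.prod (isClosed_Icc.prod isClosed_Icc))
  have e₂ : ∀ x ∈ Icc (T - d - τ) (T - d), ξ₂ x 0 = η₂ (x, 0) := fun x hx =>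
    (hη₂ (show (x, (0 : ℝ)) ∈ _ from ⟨hx, h0⟩)).symm
  have e₃ : ∀ x ∈ Icc (T - d - τ) (T - d), ∀ y ∈ Icc (-d) 0, ∀ z ∈ Icc (-d) 0,
      ξ₃ x y z = η₃ (x, y, z) := fun x hx y hy z hz =>
    (hη₃ (show (x, y, z) ∈ _ from ⟨hx, hy, hz⟩)).symm
  have b₂ : ∀ x ∈ Icc (T - d - τ) (T - d), |ξ₂ x 0| ≤ 3 * |b| / 2 := fun x hx => by
    linarith [h₂b x hx 0 h0, abs_sub_abs_le_abs_sub (ξ₂ x 0) b]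
  have b₃ : ∀ x ∈ Icc (T - d - τ) (T - d), ∀ y ∈ Icc (-d) 0, ∀ z ∈ Icc (-d) 0,
      |ξ₃ x y z| ≤ 3 * b ^ 2 / 2 := fun x hx y hy z hz => by
    linarith [h₃b x hx y hy z hz, abs_sub_abs_le_abs_sub (ξ₃ x y z) (b ^ 2), abs_sq b]
  refine ⟨?_, ?_, ?_, fun t ht => ?_, fun t ht s hs => ?_, fun t ht s hs r hr => ?_⟩
  · exact (continuous_phi1 (η₂ := fun x y => η₂ (x, y)) hη₂c).continuousOn.congr fun t ht =>
      phi1_congr ht.2 fun x hx => e₂ x (Icc_subset_Icc ht.1 le_rfl hx)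
  · exact (continuous_phi2 (η₂ := fun x y => η₂ (x, y)) (η₃ := fun x y z => η₃ (x, y, z))
      hη₂c hη₃c).continuousOn.congr fun p hp =>
      phi2_congr hp.1 hp.2 e₂ fun x hx y hy => e₃ x hx y hy 0 h0
  · exact (continuous_phi3 (η₂ := fun x y => η₂ (x, y)) (η₃ := fun x y z => η₃ (x, y, z))
      hη₂c hη₃c).continuousOn.congr fun p hp =>
      phi3_congr hd hp.1 hp.2.1 hp.2.2 e₂ e₃
  · refine (abs_phi1_sub_one_le ht b₂).trans ?_
    linear_combination 9 / 4 * hτ + 9 / 4 * (τ / σ ^ 2) * sq_abs b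
  · refine (abs_phi2_sub_le ht hs b₂ fun x hx y hy => b₃ x hx y hy 0 h0).trans ?_
    linear_combination 9 / 2 * mul_le_mul_of_nonneg_left hτ (abs_nonneg b) +
      9 / 4 * |b| * (τ / σ ^ 2) * sq_abs b + 5 / 28 * abs_nonneg b
  · refine (abs_phi3_sub_le hd ht hs hr b₂ b₃).trans ?_
    linear_combination 27 / 4 * mul_le_mul_of_nonneg_left hτ (sq_nonneg b) +
      9 / 4 * (|b| ^ 2 + 2 * b ^ 2) * (τ / σ ^ 2) * sq_abs b + 1 / 56 * sq_nonneg b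

theorem stmt_2_general (b σ d T : ℝ) (hσ : σ ≠ 0) (hd : 0 < d) :
    ∃ τmax : ℝ, 0 < τmax ∧ τmax ≤ d ∧
      ∀ τ : ℝ, 0 < τ → τ ≤ τmax →
        ∀ (ξ₁ : ℝ → ℝ) (ξ₂ : ℝ → ℝ → ℝ) (ξ₃ : ℝ → ℝ → ℝ → ℝ),
          memBall b T d τ ξ₁ ξ₂ ξ₃ →
            memBall b T d τ (phi1 σ T d ξ₂) (phi2 b σ T d ξ₂ ξ₃) (phi3 b σ T d ξ₂ ξ₃) := by
  have hσ2 : 0 < σ ^ 2 := by positivity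
  refine ⟨min d (σ ^ 2 / (14 * b ^ 2 + 1)), lt_min hd (by positivity), min_le_left _ _,
    fun τ _ hτ ξ₁ ξ₂ ξ₃ hξ => memBall_phi hd.le ?_ hξ⟩
  have hτσ := (le_div_iff₀ (by positivity)).1 (hτ.trans (min_le_right _ _))
  rw [← mul_div_assoc, div_le_iff₀ hσ2]
  nlinarith [sq_nonneg b]

/-- There exists `τ̃ ∈ (0, d]` such that for every `τ ∈ (0, τ̃]` the
operator `φ = (φ₁, φ₂, φ₃)` maps the ball `B_τ` into itself. -/
theorem stmt_2 (b σ d T : ℝ) (hσ : σ ≠ 0) (hd : 0 < d) (hT : 2 * d ≤ T) :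
    ∃ τmax : ℝ, 0 < τmax ∧ τmax ≤ d ∧
      ∀ τ : ℝ, 0 < τ → τ ≤ τmax →
        ∀ (ξ₁ : ℝ → ℝ) (ξ₂ : ℝ → ℝ → ℝ) (ξ₃ : ℝ → ℝ → ℝ → ℝ),
          memBall b T d τ ξ₁ ξ₂ ξ₃ →
            memBall b T d τ (phi1 σ T d ξ₂) (phi2 b σ T d ξ₂ ξ₃) (phi3 b σ T d ξ₂ ξ₃) :=
  stmt_2_general b σ d T hσ hd
end

section
/- Fix reals b, σ with σ ≠ 0, d > 0, T ≥ 2d and τ ∈ (0, d]. Let ξ = (ξ₁, ξ₂, ξ₃) be any continuous solution of the first-slice integral system on D_τ. Then ξ is Lipschitz: there exists a constant L > 0 such that ξ₁ is L-Lipschitz on [T−d−τ, T−d], ξ₂ is L-Lipschitz in each of its two variables on [T−d−τ, T−d]×[−d,0], and ξ₃ is L-Lipschitz in each of its three variables on [T−d−τ, T−d]×[−d,0]². -/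
open Set MeasureTheory Filter Real
open scoped Nat

/-!
Continuity on the compact slice bounds `ξ₂` and `ξ₃` by some `M`, and equation (i) then makes `ξ₁`
Lipschitz with constant `M² / σ²`. For `ξ₂` and `ξ₃` the equations are compared along the
characteristics: the substitution `x = t + y` turns the integrals in (ii) and (iii) into integrals
over `y ∈ [0, ℓ]` of products of values at `(t + y, s - y, r - y)`. For two points at sup-distance
`δ`, the upper limits `ℓ` and the terms outside the integrals differ by `O(δ)`, while the integrands
differ by `O(g_δ(x + y))`, where `g_δ(x)` is the modulus of continuity of `(ξ₂, ξ₃)` at scale `δ`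
over the points with time `≥ x`. Hence `g_δ(x) ≤ C δ + β ∫ₓ^{T-d} g_δ`, and Grönwall's inequality,
run backwards from `T - d`, gives `g_δ(T - d - τ) ≤ C e^{βτ} δ`. The arguments of `ξ₂` in (iii)
move by up to `2δ`, which costs only a factor `2` since `g_{2δ} ≤ 2 g_δ` on a convex domain.
-/

/-- The first-slice integral system on `D_τ = [T-d-τ, T-d] × [-d,0]²`. -/
def isSolutionOn (b σ T d τ : ℝ) (ξ₁ : ℝ → ℝ) (ξ₂ : ℝ → ℝ → ℝ) (ξ₃ : ℝ → ℝ → ℝ → ℝ) : Prop :=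
  ∀ t ∈ Icc (T - d - τ) (T - d), ∀ s ∈ Icc (-d) 0, ∀ r ∈ Icc (-d) 0,
    ξ₁ t = 1 - (σ ^ 2)⁻¹ * ∫ x in t..(T - d), (ξ₂ x 0) ^ 2 ∧
    ξ₂ t s = b * ξ₁ (min (T - d) (t + s + d)) -
      (σ ^ 2)⁻¹ * ∫ x in t..(min (T - d) (t + s + d)), ξ₂ x 0 * ξ₃ x (t + s - x) 0 ∧
    ξ₃ t s r = b * ξ₂ (min (T - d) (t + min s r + d)) (|s - r| - d) -
      (σ ^ 2)⁻¹ * ∫ x in t..(min (T - d) (t + min s r + d)),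
        ξ₃ x (t + s - x) 0 * ξ₃ x 0 (t + r - x)

theorem abs_min_add_sub_min_add_le (c t w t' w' d : ℝ) :
    |min c (t + w + d) - min c (t' + w' + d)| ≤ |t - t'| + |w - w'| :=
  (abs_min_sub_min_le_max _ _ _ _).trans <| max_le (by rw [sub_self, abs_zero]; positivity) <| by
    rw [show t + w + d - (t' + w' + d) = (t - t') + (w - w') by ring]; exact abs_add_le _ _

theorem abs_min_sub_min_le_of_le {c t w t' w' d δ : ℝ} (ht : |t - t'| ≤ δ) (hw : |w - w'| ≤ δ) :
    |min (c - t) (w + d) - min (c - t') (w' + d)| ≤ δ :=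
  (abs_min_sub_min_le_max _ _ _ _).trans <| max_le
    (by rwa [sub_sub_sub_cancel_left, abs_sub_comm]) (by rwa [add_sub_add_right_eq_sub])

theorem abs_abs_sub_sub_abs_sub_le (s r s' r' d : ℝ) :
    |(|s - r| - d) - (|s' - r'| - d)| ≤ |s - s'| + |r - r'| := by
  rw [sub_sub_sub_cancel_right]
  refine (abs_abs_sub_abs_le_abs_sub _ _).trans ?_
  rw [show s - r - (s' - r') = (s - s') - (r - r') by ring]
  exact abs_sub _ _

theorem abs_mul_sub_mul_le {a a' c c' M : ℝ} (ha : |a| ≤ M) (hc' : |c'| ≤ M) :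
    |a * c - a' * c'| ≤ M * (|a - a'| + |c - c'|) :=
  calc |a * c - a' * c'| = |a * (c - c') + c' * (a - a')| := by ring_nf
    _ ≤ |a| * |c - c'| + |c'| * |a - a'| := by rw [← abs_mul, ← abs_mul]; exact abs_add_le _ _
    _ ≤ M * |c - c'| + M * |a - a'| := by gcongr
    _ = M * (|a - a'| + |c - c'|) := by ring

theorem abs_mul_sub_mul_sub_le {b K X X' Y Y' u v : ℝ} (hK : 0 ≤ K) (hX : |X - X'| ≤ u)
    (hY : |Y - Y'| ≤ v) : |(b * X - K * Y) - (b * X' - K * Y')| ≤ |b| * u + K * v :=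
  calc |(b * X - K * Y) - (b * X' - K * Y')| = |b * (X - X') - K * (Y - Y')| := by ring_nf
    _ ≤ |b * (X - X')| + |K * (Y - Y')| := abs_sub _ _
    _ = |b| * |X - X'| + K * |Y - Y'| := by rw [abs_mul, abs_mul, abs_of_nonneg hK]
    _ ≤ |b| * u + K * v := by gcongr

theorem integral_exp_add_pow_div_factorial (C B β b x : ℝ) (n : ℕ) :
    β * ∫ y in x..b, (C * exp (β * (b - y)) + B * (β * (b - y)) ^ n / n !) =
      C * exp (β * (b - x)) - C + B * (β * (b - x)) ^ (n + 1) / (n + 1)! := by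
  have hderiv : ∀ y ∈ uIcc x b, HasDerivAt
      (fun y => -(C * exp (β * (b - y)) + B * (β * (b - y)) ^ (n + 1) / (n + 1)!))
      (β * (C * exp (β * (b - y)) + B * (β * (b - y)) ^ n / n !)) y := by
    intro y _
    have hlin : HasDerivAt (fun y => β * (b - y)) (-β) y := by
      simpa using ((hasDerivAt_id y).const_sub b).const_mul β
    refine (((hlin.exp.const_mul C).add
      (((hlin.pow (n + 1)).const_mul B).div_const ((n + 1)! : ℝ))).neg).congr_deriv ?_
    rw [Nat.factorial_succ]
    push_cast
    field_simp
    ring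
  rw [← intervalIntegral.integral_const_mul,
    intervalIntegral.integral_eq_sub_of_hasDerivAt hderiv
    ((Continuous.intervalIntegrable (by fun_prop) _ _))]
  simp only [sub_self, mul_zero, exp_zero, mul_one, zero_pow (Nat.succ_ne_zero n), zero_div,
    add_zero]
  ring

theorem le_mul_exp_add_pow_div_factorial {f : ℝ → ℝ} {a b B C β : ℝ} (hC : 0 ≤ C) (hβ : 0 ≤ β)
    (hfB : ∀ x ∈ Icc a b, f x ≤ B) (hfi : ∀ x ∈ Icc a b, IntervalIntegrable f volume x b)
    (hf : ∀ x ∈ Icc a b, f x ≤ C + β * ∫ y in x..b, f y) (n : ℕ) :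
    ∀ x ∈ Icc a b, f x ≤ C * exp (β * (b - x)) + B * (β * (b - x)) ^ n / n ! := by
  induction n with
  | zero =>
    intro x hx
    simpa using (hfB x hx).trans (le_add_of_nonneg_left (by positivity))
  | succ n ih =>
    intro x hx
    have hmono : ∫ y in x..b, f y ≤
        ∫ y in x..b, (C * exp (β * (b - y)) + B * (β * (b - y)) ^ n / n !) :=
      intervalIntegral.integral_mono_on hx.2 (hfi x hx)
        ((Continuous.intervalIntegrable (by fun_prop) _ _))
        fun y hy => ih y ⟨hx.1.trans hy.1, hy.2⟩
    calc f x ≤ C + β * ∫ y in x..b, f y := hf x hx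
      _ ≤ C + β * ∫ y in x..b, (C * exp (β * (b - y)) + B * (β * (b - y)) ^ n / n !) := by
        gcongr
      _ = _ := by rw [integral_exp_add_pow_div_factorial]; ring

theorem le_mul_exp_of_le_add_mul_integral {f : ℝ → ℝ} {a b B C β : ℝ} (hC : 0 ≤ C) (hβ : 0 ≤ β)
    (hfB : ∀ x ∈ Icc a b, f x ≤ B) (hfi : ∀ x ∈ Icc a b, IntervalIntegrable f volume x b)
    (hf : ∀ x ∈ Icc a b, f x ≤ C + β * ∫ y in x..b, f y) :
    ∀ x ∈ Icc a b, f x ≤ C * exp (β * (b - x)) := by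
  intro x hx
  have hlim : Tendsto (fun n : ℕ => C * exp (β * (b - x)) + B * (β * (b - x)) ^ n / n !) atTop
      (nhds (C * exp (β * (b - x)))) := by
    simpa [mul_div_assoc] using
      ((FloorSemiring.tendsto_pow_div_factorial_atTop (β * (b - x))).const_mul B).const_add
        (C * exp (β * (b - x)))
  exact ge_of_tendsto' hlim fun n => le_mul_exp_add_pow_div_factorial hC hβ hfB hfi hf n x hx

theorem integral_min_add_add_left (F : ℝ → ℝ) (t u v : ℝ) :
    ∫ x in t..min (t + u) (t + v), F x = ∫ y in 0..min u v, F (t + y) := by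
  rw [min_add_add_left, intervalIntegral.integral_comp_add_left, add_zero]

theorem abs_integral_sub_integral_le_of_le {G G' ψ : ℝ → ℝ} {ℓ ℓ' M : ℝ} (hℓ : 0 ≤ ℓ)
    (hℓℓ' : ℓ ≤ ℓ') (hG : IntervalIntegrable G volume 0 ℓ)
    (hG' : IntervalIntegrable G' volume 0 ℓ') (hG'M : ∀ y ∈ Icc ℓ ℓ', |G' y| ≤ M)
    (hψ : IntervalIntegrable ψ volume 0 ℓ) (hGG' : ∀ y ∈ Icc 0 ℓ, |G y - G' y| ≤ ψ y) :
    |(∫ y in 0..ℓ, G y) - ∫ y in 0..ℓ', G' y| ≤ M * (ℓ' - ℓ) + ∫ y in 0..ℓ, ψ y := by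
  have hG'₁ : IntervalIntegrable G' volume 0 ℓ :=
    hG'.mono_set (uIcc_subset_uIcc left_mem_uIcc (mem_uIcc_of_le hℓ hℓℓ'))
  have hG'₂ : IntervalIntegrable G' volume ℓ ℓ' :=
    hG'.mono_set (uIcc_subset_uIcc (mem_uIcc_of_le hℓ hℓℓ') right_mem_uIcc)
  have hhead : |∫ y in 0..ℓ, (G y - G' y)| ≤ ∫ y in 0..ℓ, ψ y :=
    (intervalIntegral.abs_integral_le_integral_abs hℓ).trans
      (intervalIntegral.integral_mono_on hℓ (hG.sub hG'₁).abs hψ hGG')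
  have htail : |∫ y in ℓ..ℓ', G' y| ≤ M * (ℓ' - ℓ) := by
    have := intervalIntegral.norm_integral_le_of_norm_le_const (f := G') fun y hy =>
      (Real.norm_eq_abs (G' y)).symm ▸ hG'M y (Ioc_subset_Icc_self (uIoc_of_le hℓℓ' ▸ hy))
    rwa [Real.norm_eq_abs, abs_of_nonneg (sub_nonneg.2 hℓℓ')] at this
  rw [← intervalIntegral.integral_add_adjacent_intervals hG'₁ hG'₂,
    ← sub_sub, ← intervalIntegral.integral_sub hG hG'₁]
  exact (abs_sub _ _).trans (by linarith)

theorem abs_integral_sub_integral_le {G G' ψ : ℝ → ℝ} {ℓ ℓ' M : ℝ} (hℓ : 0 ≤ ℓ) (hℓ' : 0 ≤ ℓ')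
    (hG : IntervalIntegrable G volume 0 ℓ) (hG' : IntervalIntegrable G' volume 0 ℓ')
    (hGM : ∀ y ∈ Icc 0 ℓ, |G y| ≤ M) (hG'M : ∀ y ∈ Icc 0 ℓ', |G' y| ≤ M)
    (hψ : IntervalIntegrable ψ volume 0 (min ℓ ℓ'))
    (hGG' : ∀ y ∈ Icc 0 (min ℓ ℓ'), |G y - G' y| ≤ ψ y) :
    |(∫ y in 0..ℓ, G y) - ∫ y in 0..ℓ', G' y| ≤ M * |ℓ - ℓ'| + ∫ y in 0..min ℓ ℓ', ψ y := by
  rcases le_total ℓ ℓ' with h | h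
  · rw [min_eq_left h] at hψ hGG' ⊢
    rw [abs_sub_comm ℓ, abs_of_nonneg (sub_nonneg.2 h)]
    exact abs_integral_sub_integral_le_of_le hℓ h hG hG'
      (fun y hy => hG'M y ⟨hℓ.trans hy.1, hy.2⟩) hψ hGG'
  · rw [min_eq_right h] at hψ hGG' ⊢
    rw [abs_sub_comm, abs_of_nonneg (sub_nonneg.2 h)]
    exact abs_integral_sub_integral_le_of_le hℓ' h hG' hG
      (fun y hy => hGM y ⟨hℓ'.trans hy.1, hy.2⟩) hψ
      (fun y hy => abs_sub_comm (G y) (G' y) ▸ hGG' y hy)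

theorem Antitone.integral_comp_add_left_le {g : ℝ → ℝ} (hg : Antitone g) (hg₀ : ∀ y, 0 ≤ g y)
    {x b c : ℝ} (hc : 0 ≤ c) (hxc : x + c ≤ b) :
    ∫ y in 0..c, g (x + y) ≤ ∫ y in x..b, g y := by
  rw [intervalIntegral.integral_comp_add_left g x, add_zero]
  exact intervalIntegral.integral_mono_interval le_rfl (le_add_of_nonneg_right hc) hxc
    (Eventually.of_forall hg₀) hg.intervalIntegrable

theorem abs_integral_sub_integral_le_of_antitone {G G' g : ℝ → ℝ} {ℓ ℓ' M N δ x b : ℝ}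
    (hg : Antitone g) (hg₀ : ∀ y, 0 ≤ g y) (hN : 0 ≤ N) (hℓ : 0 ≤ ℓ) (hℓ' : 0 ≤ ℓ')
    (hℓℓ' : |ℓ - ℓ'| ≤ δ) (hxℓ : x + ℓ ≤ b)
    (hG : ContinuousOn G (Icc 0 ℓ)) (hG' : ContinuousOn G' (Icc 0 ℓ'))
    (hGM : ∀ y ∈ Icc 0 ℓ, |G y| ≤ M) (hG'M : ∀ y ∈ Icc 0 ℓ', |G' y| ≤ M)
    (hGG' : ∀ y ∈ Icc 0 (min ℓ ℓ'), |G y - G' y| ≤ N * g (x + y)) :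
    |(∫ y in 0..ℓ, G y) - ∫ y in 0..ℓ', G' y| ≤ M * δ + N * ∫ y in x..b, g y := by
  have hM : 0 ≤ M := (abs_nonneg _).trans (hGM 0 (left_mem_Icc.2 hℓ))
  have hshift : ∫ y in 0..min ℓ ℓ', g (x + y) ≤ ∫ y in x..b, g y :=
    hg.integral_comp_add_left_le hg₀ (le_min hℓ hℓ') (by linarith [min_le_left ℓ ℓ'])
  have hψ : IntervalIntegrable (fun y => N * g (x + y)) volume 0 (min ℓ ℓ') :=
    ((hg.comp_monotone (monotone_id.const_add x)).intervalIntegrable).const_mul N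
  refine (abs_integral_sub_integral_le hℓ hℓ'
    (hG.intervalIntegrable_of_Icc hℓ) (hG'.intervalIntegrable_of_Icc hℓ') hGM hG'M hψ hGG').trans ?_
  rw [intervalIntegral.integral_const_mul]
  gcongr

def tailIncrements {E : Type*} [PseudoMetricSpace E] (f : ℝ × E → ℝ) (S : Set (ℝ × E))
    (δ x : ℝ) : Set ℝ :=
  {v | ∃ p ∈ S, ∃ q ∈ S, x ≤ p.1 ∧ x ≤ q.1 ∧ dist p q ≤ δ ∧ |f p - f q| = v}

noncomputable def tailModulus {E : Type*} [PseudoMetricSpace E] (f : ℝ × E → ℝ)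
    (S : Set (ℝ × E)) (δ x : ℝ) : ℝ :=
  sSup (tailIncrements f S δ x)

section TailModulus

variable {E : Type*} [PseudoMetricSpace E] {f : ℝ × E → ℝ} {S : Set (ℝ × E)} {C M δ x : ℝ}

theorem tailModulus_nonneg : 0 ≤ tailModulus f S δ x :=
  Real.sSup_nonneg fun _ ⟨_, _, _, _, _, _, _, hv⟩ => hv ▸ abs_nonneg _

theorem tailModulus_le_of_forall (hC : 0 ≤ C)
    (h : ∀ p ∈ S, ∀ q ∈ S, x ≤ p.1 → x ≤ q.1 → dist p q ≤ δ → |f p - f q| ≤ C) :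
    tailModulus f S δ x ≤ C :=
  Real.sSup_le (fun _ ⟨p, hp, q, hq, hxp, hxq, hpq, hv⟩ => hv ▸ h p hp q hq hxp hxq hpq) hC

theorem bddAbove_tailIncrements (hM : ∀ p ∈ S, |f p| ≤ M) :
    BddAbove (tailIncrements f S δ x) :=
  ⟨2 * M, fun _ ⟨p, hp, q, hq, _, _, _, hv⟩ =>
    hv ▸ (abs_sub _ _).trans (by linarith [hM p hp, hM q hq])⟩

theorem abs_sub_le_tailModulus (hM : ∀ p ∈ S, |f p| ≤ M) {p q : ℝ × E} (hp : p ∈ S)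
    (hq : q ∈ S) (hxp : x ≤ p.1) (hxq : x ≤ q.1) (hpq : dist p q ≤ δ) :
    |f p - f q| ≤ tailModulus f S δ x :=
  le_csSup (bddAbove_tailIncrements hM) ⟨p, hp, q, hq, hxp, hxq, hpq, rfl⟩

theorem tailModulus_le (hM₀ : 0 ≤ M) (hM : ∀ p ∈ S, |f p| ≤ M) :
    tailModulus f S δ x ≤ 2 * M :=
  tailModulus_le_of_forall (by positivity) fun p hp q hq _ _ _ =>
    (abs_sub _ _).trans (by linarith [hM p hp, hM q hq])

theorem antitone_tailModulus (hM : ∀ p ∈ S, |f p| ≤ M) : Antitone (tailModulus f S δ) :=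
  fun _ _ hxx' => tailModulus_le_of_forall tailModulus_nonneg fun _ hp _ hq hxp hxq hpq =>
    abs_sub_le_tailModulus hM hp hq (hxx'.trans hxp) (hxx'.trans hxq) hpq

end TailModulus

theorem tailModulus_two_mul_le {E : Type*} [NormedAddCommGroup E] [NormedSpace ℝ E]
    {f : ℝ × E → ℝ} {S : Set (ℝ × E)} {M δ x : ℝ} (hS : Convex ℝ S)
    (hM : ∀ p ∈ S, |f p| ≤ M) :
    tailModulus f S (2 * δ) x ≤ 2 * tailModulus f S δ x := by
  have h₀ : 0 ≤ tailModulus f S δ x := tailModulus_nonneg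
  refine tailModulus_le_of_forall (by positivity) fun p hp q hq hxp hxq hpq => ?_
  set m := midpoint ℝ p q
  have hxm : x ≤ m.1 := by
    simp only [m, midpoint_eq_smul_add, Prod.smul_fst, Prod.fst_add, smul_eq_mul,
      invOf_eq_inv]
    linarith
  have hpm : dist p m ≤ δ := by
    rw [dist_left_midpoint, norm_ofNat]; linarith
  have hmq : dist m q ≤ δ := by
    rw [dist_midpoint_right, norm_ofNat]; linarith
  have hm : m ∈ S := hS.midpoint_mem hp hq
  calc |f p - f q| ≤ |f p - f m| + |f m - f q| := abs_sub_le _ _ _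
    _ ≤ _ := by linarith [abs_sub_le_tailModulus hM hp hm hxp hxm hpm,
      abs_sub_le_tailModulus hM hm hq hxm hxq hmq]

section FirstSlice

variable {b σ T d τ M : ℝ} {ξ₁ : ℝ → ℝ} {ξ₂ : ℝ → ℝ → ℝ} {ξ₃ : ℝ → ℝ → ℝ → ℝ}

theorem add_sub_mem_slice {t s y : ℝ} (ht : t ∈ Icc (T - d - τ) (T - d)) (hs : s ∈ Icc (-d) 0)
    (hy : 0 ≤ y) (hyt : y ≤ T - d - t) (hys : y ≤ s + d) :
    t + y ∈ Icc (T - d - τ) (T - d) ∧ s - y ∈ Icc (-d) 0 :=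
  ⟨⟨by linarith [ht.1], by linarith⟩, ⟨by linarith, by linarith [hs.2]⟩⟩

theorem min_add_mem_slice {t w : ℝ} (ht : t ∈ Icc (T - d - τ) (T - d)) (hw : -d ≤ w) :
    min (T - d) (t + w + d) ∈ Icc t (T - d) :=
  ⟨le_min ht.2 (by linarith), min_le_left _ _⟩

theorem abs_sub_sub_mem_slice {s r : ℝ} (hs : s ∈ Icc (-d) 0) (hr : r ∈ Icc (-d) 0) :
    |s - r| - d ∈ Icc (-d) 0 :=
  ⟨by linarith [abs_nonneg (s - r)],
    sub_nonpos.2 (abs_sub_le_iff.2 ⟨by linarith [hs.2, hr.1], by linarith [hs.1, hr.2]⟩)⟩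

theorem dist_xi₂_args_le {t s r t' s' r' δ : ℝ} (htt' : |t - t'| ≤ δ) (hss' : |s - s'| ≤ δ)
    (hrr' : |r - r'| ≤ δ) :
    dist (min (T - d) (t + min s r + d), |s - r| - d)
      (min (T - d) (t' + min s' r' + d), |s' - r'| - d) ≤ 2 * δ := by
  have hww' : |min s r - min s' r'| ≤ δ :=
    (abs_min_sub_min_le_max _ _ _ _).trans (max_le hss' hrr')
  simp only [Prod.dist_eq, Real.dist_eq, max_le_iff]
  constructor <;> linarith [abs_min_add_sub_min_add_le (T - d) t (min s r) t' (min s' r') d,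
    abs_abs_sub_sub_abs_sub_le s r s' r' d]

theorem isSolutionOn.xi₂_eq (hsol : isSolutionOn b σ T d τ ξ₁ ξ₂ ξ₃) {t s : ℝ}
    (ht : t ∈ Icc (T - d - τ) (T - d)) (hs : s ∈ Icc (-d) 0) :
    ξ₂ t s = b * ξ₁ (min (T - d) (t + s + d)) -
      (σ ^ 2)⁻¹ * ∫ y in 0..min (T - d - t) (s + d), ξ₂ (t + y) 0 * ξ₃ (t + y) (s - y) 0 := by
  rw [(hsol t ht s hs s hs).2.1]
  congr 2
  rw [show min (T - d) (t + s + d) = min (t + (T - d - t)) (t + (s + d)) by ring_nf,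
    integral_min_add_add_left]
  simp only [add_sub_add_left_eq_sub]

theorem isSolutionOn.xi₃_eq (hsol : isSolutionOn b σ T d τ ξ₁ ξ₂ ξ₃) {t s r : ℝ}
    (ht : t ∈ Icc (T - d - τ) (T - d)) (hs : s ∈ Icc (-d) 0) (hr : r ∈ Icc (-d) 0) :
    ξ₃ t s r = b * ξ₂ (min (T - d) (t + min s r + d)) (|s - r| - d) -
      (σ ^ 2)⁻¹ * ∫ y in 0..min (T - d - t) (min s r + d),
        ξ₃ (t + y) (s - y) 0 * ξ₃ (t + y) 0 (r - y) := by
  rw [(hsol t ht s hs r hr).2.2]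
  congr 2
  rw [show min (T - d) (t + min s r + d) = min (t + (T - d - t)) (t + (min s r + d)) by ring_nf,
    integral_min_add_add_left]
  simp only [add_sub_add_left_eq_sub]

structure IsSliceBound (T d τ M : ℝ) (ξ₂ : ℝ → ℝ → ℝ) (ξ₃ : ℝ → ℝ → ℝ → ℝ) : Prop where
  nonneg : 0 ≤ M
  xi₂ : ∀ p ∈ Icc (T - d - τ) (T - d) ×ˢ Icc (-d) 0, |ξ₂ p.1 p.2| ≤ M
  xi₃ : ∀ p ∈ Icc (T - d - τ) (T - d) ×ˢ Icc (-d) 0 ×ˢ Icc (-d) 0, |ξ₃ p.1 p.2.1 p.2.2| ≤ M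

theorem exists_isSliceBound
    (hc₂ : ContinuousOn (fun p : ℝ × ℝ => ξ₂ p.1 p.2) (Icc (T - d - τ) (T - d) ×ˢ Icc (-d) 0))
    (hc₃ : ContinuousOn (fun p : ℝ × ℝ × ℝ => ξ₃ p.1 p.2.1 p.2.2)
      (Icc (T - d - τ) (T - d) ×ˢ Icc (-d) 0 ×ˢ Icc (-d) 0)) :
    ∃ M, IsSliceBound T d τ M ξ₂ ξ₃ := by
  obtain ⟨M₂, hM₂⟩ := (isCompact_Icc.prod isCompact_Icc).exists_bound_of_continuousOn hc₂
  obtain ⟨M₃, hM₃⟩ :=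
    (isCompact_Icc.prod (isCompact_Icc.prod isCompact_Icc)).exists_bound_of_continuousOn hc₃
  exact ⟨max 0 (max M₂ M₃), le_max_left _ _,
    fun p hp => (hM₂ p hp).trans (le_max_of_le_right (le_max_left _ _)),
    fun p hp => (hM₃ p hp).trans (le_max_of_le_right (le_max_right _ _))⟩

theorem isSolutionOn.abs_sub_xi₁_le (hsol : isSolutionOn b σ T d τ ξ₁ ξ₂ ξ₃) (hd : 0 ≤ d)
    (hc₂ : ContinuousOn (fun p : ℝ × ℝ => ξ₂ p.1 p.2) (Icc (T - d - τ) (T - d) ×ˢ Icc (-d) 0))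
    (hM : IsSliceBound T d τ M ξ₂ ξ₃) {t t' : ℝ}
    (ht : t ∈ Icc (T - d - τ) (T - d)) (ht' : t' ∈ Icc (T - d - τ) (T - d)) :
    |ξ₁ t - ξ₁ t'| ≤ (σ ^ 2)⁻¹ * M ^ 2 * |t - t'| := by
  have h0 : (0 : ℝ) ∈ Icc (-d) 0 := right_mem_Icc.2 (neg_nonpos.2 hd)
  have hTd : T - d ∈ Icc (T - d - τ) (T - d) := right_mem_Icc.2 (ht.1.trans ht.2)
  have hc : ContinuousOn (fun x => ξ₂ x 0 ^ 2) (Icc (T - d - τ) (T - d)) :=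
    (hc₂.comp (f := fun x => (x, 0)) (by fun_prop) fun x hx => ⟨hx, h0⟩).pow 2
  have hi : ∀ {u v}, u ∈ Icc (T - d - τ) (T - d) → v ∈ Icc (T - d - τ) (T - d) →
      IntervalIntegrable (fun x => ξ₂ x 0 ^ 2) volume u v :=
    fun hu hv => (hc.mono (uIcc_subset_Icc hu hv)).intervalIntegrable
  have hbound := intervalIntegral.norm_integral_le_of_norm_le_const (a := t') (b := t)
    (f := fun x => ξ₂ x 0 ^ 2) (C := M ^ 2) fun x hx => by
      rw [Real.norm_eq_abs, abs_pow]
      exact pow_le_pow_left₀ (abs_nonneg _)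
        (hM.xi₂ (x, 0) ⟨uIcc_subset_Icc ht' ht (uIoc_subset_uIcc hx), h0⟩) 2
  rw [(hsol t ht 0 h0 0 h0).1, (hsol t' ht' 0 h0 0 h0).1,
    ← intervalIntegral.integral_add_adjacent_intervals (hi ht' ht) (hi ht hTd)]
  rw [Real.norm_eq_abs] at hbound
  calc |(1 - (σ ^ 2)⁻¹ * ∫ x in t..T - d, ξ₂ x 0 ^ 2) -
        (1 - (σ ^ 2)⁻¹ * ((∫ x in t'..t, ξ₂ x 0 ^ 2) + ∫ x in t..T - d, ξ₂ x 0 ^ 2))|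
      = |(σ ^ 2)⁻¹ * ∫ x in t'..t, ξ₂ x 0 ^ 2| := by congr 1; ring
    _ = (σ ^ 2)⁻¹ * |∫ x in t'..t, ξ₂ x 0 ^ 2| := by rw [abs_mul, abs_of_nonneg (by positivity)]
    _ ≤ (σ ^ 2)⁻¹ * M ^ 2 * |t - t'| := by rw [mul_assoc]; gcongr

noncomputable def sliceModulus (T d τ : ℝ) (ξ₂ : ℝ → ℝ → ℝ) (ξ₃ : ℝ → ℝ → ℝ → ℝ) (δ x : ℝ) : ℝ :=
  tailModulus (fun p : ℝ × ℝ => ξ₂ p.1 p.2) (Icc (T - d - τ) (T - d) ×ˢ Icc (-d) 0) δ x +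
    tailModulus (fun p : ℝ × ℝ × ℝ => ξ₃ p.1 p.2.1 p.2.2)
      (Icc (T - d - τ) (T - d) ×ˢ Icc (-d) 0 ×ˢ Icc (-d) 0) δ x

theorem sliceModulus_nonneg {δ x : ℝ} : 0 ≤ sliceModulus T d τ ξ₂ ξ₃ δ x :=
  add_nonneg tailModulus_nonneg tailModulus_nonneg

theorem sliceModulus_le (hM : IsSliceBound T d τ M ξ₂ ξ₃) {δ x : ℝ} :
    sliceModulus T d τ ξ₂ ξ₃ δ x ≤ 4 * M := by
  rw [sliceModulus]
  linarith [tailModulus_le hM.nonneg hM.xi₂ (δ := δ) (x := x),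
    tailModulus_le hM.nonneg hM.xi₃ (δ := δ) (x := x)]

theorem antitone_sliceModulus (hM : IsSliceBound T d τ M ξ₂ ξ₃) {δ : ℝ} :
    Antitone (sliceModulus T d τ ξ₂ ξ₃ δ) :=
  (antitone_tailModulus hM.xi₂).add (antitone_tailModulus hM.xi₃)

theorem continuousOn_xi₂_integrand (hd : 0 ≤ d)
    (hc₂ : ContinuousOn (fun p : ℝ × ℝ => ξ₂ p.1 p.2) (Icc (T - d - τ) (T - d) ×ˢ Icc (-d) 0))
    (hc₃ : ContinuousOn (fun p : ℝ × ℝ × ℝ => ξ₃ p.1 p.2.1 p.2.2)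
      (Icc (T - d - τ) (T - d) ×ˢ Icc (-d) 0 ×ˢ Icc (-d) 0))
    {t s : ℝ} (ht : t ∈ Icc (T - d - τ) (T - d)) (hs : s ∈ Icc (-d) 0) :
    ContinuousOn (fun y => ξ₂ (t + y) 0 * ξ₃ (t + y) (s - y) 0)
      (Icc 0 (min (T - d - t) (s + d))) := by
  have h0 : (0 : ℝ) ∈ Icc (-d) 0 := right_mem_Icc.2 (neg_nonpos.2 hd)
  have hdom := fun y (hy : y ∈ Icc 0 (min (T - d - t) (s + d))) =>
    add_sub_mem_slice ht hs hy.1 (hy.2.trans (min_le_left _ _)) (hy.2.trans (min_le_right _ _))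
  exact (hc₂.comp (f := fun y => (t + y, 0)) (by fun_prop) fun y hy => ⟨(hdom y hy).1, h0⟩).mul
    (hc₃.comp (f := fun y => (t + y, s - y, 0)) (by fun_prop)
      fun y hy => ⟨(hdom y hy).1, (hdom y hy).2, h0⟩)

theorem continuousOn_xi₃_integrand (hd : 0 ≤ d)
    (hc₃ : ContinuousOn (fun p : ℝ × ℝ × ℝ => ξ₃ p.1 p.2.1 p.2.2)
      (Icc (T - d - τ) (T - d) ×ˢ Icc (-d) 0 ×ˢ Icc (-d) 0))
    {t s r : ℝ} (ht : t ∈ Icc (T - d - τ) (T - d)) (hs : s ∈ Icc (-d) 0) (hr : r ∈ Icc (-d) 0) :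
    ContinuousOn (fun y => ξ₃ (t + y) (s - y) 0 * ξ₃ (t + y) 0 (r - y))
      (Icc 0 (min (T - d - t) (min s r + d))) := by
  have h0 : (0 : ℝ) ∈ Icc (-d) 0 := right_mem_Icc.2 (neg_nonpos.2 hd)
  have hdom := fun y (hy : y ∈ Icc 0 (min (T - d - t) (min s r + d))) =>
    add_sub_mem_slice ht hs hy.1 (hy.2.trans (min_le_left _ _))
      (by linarith [hy.2.trans (min_le_right _ _), min_le_left s r])
  have hdom' := fun y (hy : y ∈ Icc 0 (min (T - d - t) (min s r + d))) =>
    add_sub_mem_slice ht hr hy.1 (hy.2.trans (min_le_left _ _))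
      (by linarith [hy.2.trans (min_le_right _ _), min_le_right s r])
  exact (hc₃.comp (f := fun y => (t + y, s - y, 0)) (by fun_prop)
      fun y hy => ⟨(hdom y hy).1, (hdom y hy).2, h0⟩).mul
    (hc₃.comp (f := fun y => (t + y, 0, r - y)) (by fun_prop)
      fun y hy => ⟨(hdom y hy).1, h0, (hdom' y hy).2⟩)

theorem abs_xi₂_integrand_le (hd : 0 ≤ d) (hM : IsSliceBound T d τ M ξ₂ ξ₃) {t s : ℝ}
    (ht : t ∈ Icc (T - d - τ) (T - d)) (hs : s ∈ Icc (-d) 0) :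
    ∀ y ∈ Icc 0 (min (T - d - t) (s + d)), |ξ₂ (t + y) 0 * ξ₃ (t + y) (s - y) 0| ≤ M ^ 2 := by
  intro y hy
  have h0 : (0 : ℝ) ∈ Icc (-d) 0 := right_mem_Icc.2 (neg_nonpos.2 hd)
  obtain ⟨hty, hsy⟩ :=
    add_sub_mem_slice ht hs hy.1 (hy.2.trans (min_le_left _ _)) (hy.2.trans (min_le_right _ _))
  rw [abs_mul, sq]
  exact mul_le_mul (hM.xi₂ (_, _) ⟨hty, h0⟩) (hM.xi₃ (_, _, _) ⟨hty, hsy, h0⟩) (abs_nonneg _)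
    hM.nonneg

theorem abs_xi₃_integrand_le (hd : 0 ≤ d) (hM : IsSliceBound T d τ M ξ₂ ξ₃) {t s r : ℝ}
    (ht : t ∈ Icc (T - d - τ) (T - d)) (hs : s ∈ Icc (-d) 0) (hr : r ∈ Icc (-d) 0) :
    ∀ y ∈ Icc 0 (min (T - d - t) (min s r + d)),
      |ξ₃ (t + y) (s - y) 0 * ξ₃ (t + y) 0 (r - y)| ≤ M ^ 2 := by
  intro y hy
  have h0 : (0 : ℝ) ∈ Icc (-d) 0 := right_mem_Icc.2 (neg_nonpos.2 hd)
  obtain ⟨hty, hsy⟩ := add_sub_mem_slice ht hs hy.1 (hy.2.trans (min_le_left _ _))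
    (by linarith [hy.2.trans (min_le_right _ _), min_le_left s r])
  obtain ⟨-, hry⟩ := add_sub_mem_slice ht hr hy.1 (hy.2.trans (min_le_left _ _))
    (by linarith [hy.2.trans (min_le_right _ _), min_le_right s r])
  rw [abs_mul, sq]
  exact mul_le_mul (hM.xi₃ (_, _, _) ⟨hty, hsy, h0⟩) (hM.xi₃ (_, _, _) ⟨hty, h0, hry⟩)
    (abs_nonneg _) hM.nonneg

theorem abs_xi₂_integrand_sub_le (hd : 0 ≤ d) (hM : IsSliceBound T d τ M ξ₂ ξ₃)
    {t s t' s' x y δ : ℝ} (ht : t ∈ Icc (T - d - τ) (T - d)) (hs : s ∈ Icc (-d) 0)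
    (ht' : t' ∈ Icc (T - d - τ) (T - d)) (hs' : s' ∈ Icc (-d) 0) (hxt : x ≤ t) (hxt' : x ≤ t')
    (htt' : |t - t'| ≤ δ) (hss' : |s - s'| ≤ δ)
    (hy : y ∈ Icc 0 (min (min (T - d - t) (s + d)) (min (T - d - t') (s' + d)))) :
    |ξ₂ (t + y) 0 * ξ₃ (t + y) (s - y) 0 - ξ₂ (t' + y) 0 * ξ₃ (t' + y) (s' - y) 0| ≤
      M * sliceModulus T d τ ξ₂ ξ₃ δ (x + y) := by
  have h0 : (0 : ℝ) ∈ Icc (-d) 0 := right_mem_Icc.2 (neg_nonpos.2 hd)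
  obtain ⟨hty, hsy⟩ := add_sub_mem_slice ht hs hy.1
    (hy.2.trans ((min_le_left _ _).trans (min_le_left _ _)))
    (hy.2.trans ((min_le_left _ _).trans (min_le_right _ _)))
  obtain ⟨ht'y, hs'y⟩ := add_sub_mem_slice ht' hs' hy.1
    (hy.2.trans ((min_le_right _ _).trans (min_le_left _ _)))
    (hy.2.trans ((min_le_right _ _).trans (min_le_right _ _)))
  refine (abs_mul_sub_mul_le (hM.xi₂ (_, _) ⟨hty, h0⟩) (hM.xi₃ (_, _, _) ⟨ht'y, hs'y, h0⟩)).trans ?_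
  rw [sliceModulus]
  refine mul_le_mul_of_nonneg_left (add_le_add ?_ ?_) hM.nonneg
  · exact abs_sub_le_tailModulus hM.xi₂ (p := (t + y, 0)) (q := (t' + y, 0)) ⟨hty, h0⟩
      ⟨ht'y, h0⟩ (by dsimp only; linarith) (by dsimp only; linarith)
      (by simp [Prod.dist_eq, Real.dist_eq, htt'])
  · exact abs_sub_le_tailModulus hM.xi₃ (p := (t + y, s - y, 0)) (q := (t' + y, s' - y, 0))
      ⟨hty, hsy, h0⟩ ⟨ht'y, hs'y, h0⟩ (by dsimp only; linarith) (by dsimp only; linarith)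
      (by simp [Prod.dist_eq, Real.dist_eq, htt', hss'])

theorem abs_xi₃_integrand_sub_le (hd : 0 ≤ d) (hM : IsSliceBound T d τ M ξ₂ ξ₃)
    {t s r t' s' r' x y δ : ℝ} (ht : t ∈ Icc (T - d - τ) (T - d)) (hs : s ∈ Icc (-d) 0)
    (hr : r ∈ Icc (-d) 0) (ht' : t' ∈ Icc (T - d - τ) (T - d)) (hs' : s' ∈ Icc (-d) 0)
    (hr' : r' ∈ Icc (-d) 0) (hxt : x ≤ t) (hxt' : x ≤ t')
    (htt' : |t - t'| ≤ δ) (hss' : |s - s'| ≤ δ) (hrr' : |r - r'| ≤ δ)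
    (hy : y ∈ Icc 0 (min (min (T - d - t) (min s r + d)) (min (T - d - t') (min s' r' + d)))) :
    |ξ₃ (t + y) (s - y) 0 * ξ₃ (t + y) 0 (r - y) -
        ξ₃ (t' + y) (s' - y) 0 * ξ₃ (t' + y) 0 (r' - y)| ≤
      2 * M * sliceModulus T d τ ξ₂ ξ₃ δ (x + y) := by
  have h0 : (0 : ℝ) ∈ Icc (-d) 0 := right_mem_Icc.2 (neg_nonpos.2 hd)
  have hyℓ := hy.2.trans (min_le_left _ _)
  have hyℓ' := hy.2.trans (min_le_right _ _)
  obtain ⟨hty, hsy⟩ := add_sub_mem_slice ht hs hy.1 (hyℓ.trans (min_le_left _ _))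
    (by linarith [hyℓ.trans (min_le_right _ _), min_le_left s r])
  obtain ⟨-, hry⟩ := add_sub_mem_slice ht hr hy.1 (hyℓ.trans (min_le_left _ _))
    (by linarith [hyℓ.trans (min_le_right _ _), min_le_right s r])
  obtain ⟨ht'y, hs'y⟩ := add_sub_mem_slice ht' hs' hy.1 (hyℓ'.trans (min_le_left _ _))
    (by linarith [hyℓ'.trans (min_le_right _ _), min_le_left s' r'])
  obtain ⟨-, hr'y⟩ := add_sub_mem_slice ht' hr' hy.1 (hyℓ'.trans (min_le_left _ _))
    (by linarith [hyℓ'.trans (min_le_right _ _), min_le_right s' r'])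
  have h₃ : tailModulus (fun p : ℝ × ℝ × ℝ => ξ₃ p.1 p.2.1 p.2.2)
      (Icc (T - d - τ) (T - d) ×ˢ Icc (-d) 0 ×ˢ Icc (-d) 0) δ (x + y) ≤
        sliceModulus T d τ ξ₂ ξ₃ δ (x + y) :=
    le_add_of_nonneg_left tailModulus_nonneg
  refine (abs_mul_sub_mul_le (hM.xi₃ (_, _, _) ⟨hty, hsy, h0⟩)
    (hM.xi₃ (_, _, _) ⟨ht'y, h0, hr'y⟩)).trans ?_
  rw [mul_assoc, two_mul, ← mul_add]
  refine mul_le_mul_of_nonneg_left (add_le_add ?_ ?_) hM.nonneg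
  · exact (abs_sub_le_tailModulus hM.xi₃ (p := (t + y, s - y, 0)) (q := (t' + y, s' - y, 0))
      ⟨hty, hsy, h0⟩ ⟨ht'y, hs'y, h0⟩ (by dsimp only; linarith) (by dsimp only; linarith)
      (by simp [Prod.dist_eq, Real.dist_eq, htt', hss'])).trans h₃
  · exact (abs_sub_le_tailModulus hM.xi₃ (p := (t + y, 0, r - y)) (q := (t' + y, 0, r' - y))
      ⟨hty, h0, hry⟩ ⟨ht'y, h0, hr'y⟩ (by dsimp only; linarith) (by dsimp only; linarith)
      (by simp [Prod.dist_eq, Real.dist_eq, htt', hrr'])).trans h₃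

theorem isSolutionOn.exists_tailModulus_xi₂_le (hsol : isSolutionOn b σ T d τ ξ₁ ξ₂ ξ₃)
    (hd : 0 ≤ d)
    (hc₂ : ContinuousOn (fun p : ℝ × ℝ => ξ₂ p.1 p.2) (Icc (T - d - τ) (T - d) ×ˢ Icc (-d) 0))
    (hc₃ : ContinuousOn (fun p : ℝ × ℝ × ℝ => ξ₃ p.1 p.2.1 p.2.2)
      (Icc (T - d - τ) (T - d) ×ˢ Icc (-d) 0 ×ˢ Icc (-d) 0))
    (hM : IsSliceBound T d τ M ξ₂ ξ₃) :
    ∃ C β : ℝ, 0 ≤ C ∧ 0 ≤ β ∧ ∀ δ x : ℝ, 0 ≤ δ → x ≤ T - d →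
      tailModulus (fun p : ℝ × ℝ => ξ₂ p.1 p.2) (Icc (T - d - τ) (T - d) ×ˢ Icc (-d) 0) δ x ≤
        C * δ + β * ∫ y in x..T - d, sliceModulus T d τ ξ₂ ξ₃ δ y := by
  have hM₀ := hM.nonneg
  refine ⟨|b| * ((σ ^ 2)⁻¹ * M ^ 2 * 2) + (σ ^ 2)⁻¹ * M ^ 2, (σ ^ 2)⁻¹ * M, by positivity,
    by positivity, fun δ x hδ hx => ?_⟩
  have hI : 0 ≤ ∫ y in x..T - d, sliceModulus T d τ ξ₂ ξ₃ δ y :=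
    intervalIntegral.integral_nonneg hx fun _ _ => sliceModulus_nonneg
  refine tailModulus_le_of_forall (by positivity) ?_
  rintro ⟨t, s⟩ ⟨ht, hs⟩ ⟨t', s'⟩ ⟨ht', hs'⟩ (hxt : x ≤ t) (hxt' : x ≤ t') hpq
  obtain ⟨htt', hss'⟩ : |t - t'| ≤ δ ∧ |s - s'| ≤ δ := by
    simpa [Prod.dist_eq, Real.dist_eq] using hpq
  have hξ₁ : |ξ₁ (min (T - d) (t + s + d)) - ξ₁ (min (T - d) (t' + s' + d))| ≤
      (σ ^ 2)⁻¹ * M ^ 2 * (2 * δ) :=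
    (hsol.abs_sub_xi₁_le hd hc₂ hM (Icc_subset_Icc_left ht.1 (min_add_mem_slice ht hs.1))
      (Icc_subset_Icc_left ht'.1 (min_add_mem_slice ht' hs'.1))).trans <| by
        gcongr; linarith [abs_min_add_sub_min_add_le (T - d) t s t' s' d]
  have hint := abs_integral_sub_integral_le_of_antitone (b := T - d)
    (antitone_sliceModulus hM) (fun _ => sliceModulus_nonneg) hM₀
    (le_min (by linarith [ht.2]) (by linarith [hs.1]))
    (le_min (by linarith [ht'.2]) (by linarith [hs'.1])) (abs_min_sub_min_le_of_le htt' hss')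
    (by linarith [min_le_left (T - d - t) (s + d)])
    (continuousOn_xi₂_integrand hd hc₂ hc₃ ht hs) (continuousOn_xi₂_integrand hd hc₂ hc₃ ht' hs')
    (abs_xi₂_integrand_le hd hM ht hs) (abs_xi₂_integrand_le hd hM ht' hs')
    fun y hy => abs_xi₂_integrand_sub_le hd hM ht hs ht' hs' hxt hxt' htt' hss' hy
  dsimp only
  rw [hsol.xi₂_eq ht hs, hsol.xi₂_eq ht' hs']
  exact (abs_mul_sub_mul_sub_le (by positivity) hξ₁ hint).trans_eq (by ring)

theorem isSolutionOn.exists_tailModulus_xi₃_le (hsol : isSolutionOn b σ T d τ ξ₁ ξ₂ ξ₃)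
    (hd : 0 ≤ d)
    (hc₂ : ContinuousOn (fun p : ℝ × ℝ => ξ₂ p.1 p.2) (Icc (T - d - τ) (T - d) ×ˢ Icc (-d) 0))
    (hc₃ : ContinuousOn (fun p : ℝ × ℝ × ℝ => ξ₃ p.1 p.2.1 p.2.2)
      (Icc (T - d - τ) (T - d) ×ˢ Icc (-d) 0 ×ˢ Icc (-d) 0))
    (hM : IsSliceBound T d τ M ξ₂ ξ₃) :
    ∃ C β : ℝ, 0 ≤ C ∧ 0 ≤ β ∧ ∀ δ x : ℝ, 0 ≤ δ → x ≤ T - d →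
      tailModulus (fun p : ℝ × ℝ × ℝ => ξ₃ p.1 p.2.1 p.2.2)
        (Icc (T - d - τ) (T - d) ×ˢ Icc (-d) 0 ×ˢ Icc (-d) 0) δ x ≤
        C * δ + β * ∫ y in x..T - d, sliceModulus T d τ ξ₂ ξ₃ δ y := by
  obtain ⟨C, β, hC, hβ, h₂⟩ := hsol.exists_tailModulus_xi₂_le hd hc₂ hc₃ hM
  have hM₀ := hM.nonneg
  refine ⟨|b| * (2 * C) + (σ ^ 2)⁻¹ * M ^ 2, |b| * (2 * β) + (σ ^ 2)⁻¹ * (2 * M), by positivity,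
    by positivity, fun δ x hδ hx => ?_⟩
  have hI : 0 ≤ ∫ y in x..T - d, sliceModulus T d τ ξ₂ ξ₃ δ y :=
    intervalIntegral.integral_nonneg hx fun _ _ => sliceModulus_nonneg
  refine tailModulus_le_of_forall (by positivity) ?_
  rintro ⟨t, s, r⟩ ⟨ht, hs, hr⟩ ⟨t', s', r'⟩ ⟨ht', hs', hr'⟩ (hxt : x ≤ t) (hxt' : x ≤ t') hpq
  obtain ⟨htt', hss', hrr'⟩ : |t - t'| ≤ δ ∧ |s - s'| ≤ δ ∧ |r - r'| ≤ δ := by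
    simpa [Prod.dist_eq, Real.dist_eq] using hpq
  have hww' : |min s r - min s' r'| ≤ δ :=
    (abs_min_sub_min_le_max _ _ _ _).trans (max_le hss' hrr')
  have hm := min_add_mem_slice ht (le_min hs.1 hr.1)
  have hm' := min_add_mem_slice ht' (le_min hs'.1 hr'.1)
  have hξ₂ : |ξ₂ (min (T - d) (t + min s r + d)) (|s - r| - d) -
      ξ₂ (min (T - d) (t' + min s' r' + d)) (|s' - r'| - d)| ≤
        2 * (C * δ + β * ∫ y in x..T - d, sliceModulus T d τ ξ₂ ξ₃ δ y) := by
    refine (abs_sub_le_tailModulus hM.xi₂ (p := (_, _)) (q := (_, _)) (δ := 2 * δ)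
      ⟨Icc_subset_Icc_left ht.1 hm, abs_sub_sub_mem_slice hs hr⟩
      ⟨Icc_subset_Icc_left ht'.1 hm', abs_sub_sub_mem_slice hs' hr'⟩
      (hxt.trans hm.1) (hxt'.trans hm'.1) (dist_xi₂_args_le htt' hss' hrr')).trans <|
        (tailModulus_two_mul_le ((convex_Icc _ _).prod (convex_Icc _ _)) hM.xi₂).trans <| by
          gcongr; exact h₂ δ x hδ hx
  have hint := abs_integral_sub_integral_le_of_antitone (b := T - d) (N := 2 * M)
    (antitone_sliceModulus hM) (fun _ => sliceModulus_nonneg) (by positivity)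
    (le_min (by linarith [ht.2]) (by linarith [le_min hs.1 hr.1]))
    (le_min (by linarith [ht'.2]) (by linarith [le_min hs'.1 hr'.1]))
    (abs_min_sub_min_le_of_le htt' hww') (by linarith [min_le_left (T - d - t) (min s r + d)])
    (continuousOn_xi₃_integrand hd hc₃ ht hs hr) (continuousOn_xi₃_integrand hd hc₃ ht' hs' hr')
    (abs_xi₃_integrand_le hd hM ht hs hr) (abs_xi₃_integrand_le hd hM ht' hs' hr')
    fun y hy => abs_xi₃_integrand_sub_le hd hM ht hs hr ht' hs' hr' hxt hxt' htt' hss' hrr' hy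
  dsimp only
  rw [hsol.xi₃_eq ht hs hr, hsol.xi₃_eq ht' hs' hr']
  exact (abs_mul_sub_mul_sub_le (by positivity) hξ₂ hint).trans_eq (by ring)

theorem isSolutionOn.exists_sliceModulus_le (hsol : isSolutionOn b σ T d τ ξ₁ ξ₂ ξ₃)
    (hd : 0 ≤ d) (hτ : 0 ≤ τ)
    (hc₂ : ContinuousOn (fun p : ℝ × ℝ => ξ₂ p.1 p.2) (Icc (T - d - τ) (T - d) ×ˢ Icc (-d) 0))
    (hc₃ : ContinuousOn (fun p : ℝ × ℝ × ℝ => ξ₃ p.1 p.2.1 p.2.2)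
      (Icc (T - d - τ) (T - d) ×ˢ Icc (-d) 0 ×ˢ Icc (-d) 0))
    (hM : IsSliceBound T d τ M ξ₂ ξ₃) :
    ∃ L, 0 ≤ L ∧ ∀ δ, 0 ≤ δ → sliceModulus T d τ ξ₂ ξ₃ δ (T - d - τ) ≤ L * δ := by
  obtain ⟨C₂, β₂, hC₂, hβ₂, h₂⟩ := hsol.exists_tailModulus_xi₂_le hd hc₂ hc₃ hM
  obtain ⟨C₃, β₃, hC₃, hβ₃, h₃⟩ := hsol.exists_tailModulus_xi₃_le hd hc₂ hc₃ hM
  refine ⟨(C₂ + C₃) * exp ((β₂ + β₃) * τ), by positivity, fun δ hδ => ?_⟩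
  have hgronwall := le_mul_exp_of_le_add_mul_integral (f := sliceModulus T d τ ξ₂ ξ₃ δ)
    (by positivity : 0 ≤ (C₂ + C₃) * δ) (add_nonneg hβ₂ hβ₃) (fun _ _ => sliceModulus_le hM)
    (fun _ _ => (antitone_sliceModulus hM).intervalIntegrable) (fun x hx => by
      rw [sliceModulus]
      linarith [h₂ δ x hδ hx.2, h₃ δ x hδ hx.2]) (T - d - τ) (left_mem_Icc.2 (by linarith))
  rw [sub_sub_cancel] at hgronwall
  linarith

theorem isSolutionOn.exists_lipschitz (hsol : isSolutionOn b σ T d τ ξ₁ ξ₂ ξ₃)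
    (hd : 0 ≤ d) (hτ : 0 ≤ τ)
    (hc₂ : ContinuousOn (fun p : ℝ × ℝ => ξ₂ p.1 p.2) (Icc (T - d - τ) (T - d) ×ˢ Icc (-d) 0))
    (hc₃ : ContinuousOn (fun p : ℝ × ℝ × ℝ => ξ₃ p.1 p.2.1 p.2.2)
      (Icc (T - d - τ) (T - d) ×ˢ Icc (-d) 0 ×ˢ Icc (-d) 0)) :
    ∃ L, 0 < L ∧
      (∀ t ∈ Icc (T - d - τ) (T - d), ∀ t' ∈ Icc (T - d - τ) (T - d),
        |ξ₁ t - ξ₁ t'| ≤ L * |t - t'|) ∧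
      (∀ p ∈ Icc (T - d - τ) (T - d) ×ˢ Icc (-d) 0, ∀ q ∈ Icc (T - d - τ) (T - d) ×ˢ Icc (-d) 0,
        |ξ₂ p.1 p.2 - ξ₂ q.1 q.2| ≤ L * dist p q) ∧
      (∀ p ∈ Icc (T - d - τ) (T - d) ×ˢ Icc (-d) 0 ×ˢ Icc (-d) 0,
        ∀ q ∈ Icc (T - d - τ) (T - d) ×ˢ Icc (-d) 0 ×ˢ Icc (-d) 0,
          |ξ₃ p.1 p.2.1 p.2.2 - ξ₃ q.1 q.2.1 q.2.2| ≤ L * dist p q) := by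
  obtain ⟨M, hM⟩ := exists_isSliceBound hc₂ hc₃
  obtain ⟨L, hL₀, hL⟩ := hsol.exists_sliceModulus_le hd hτ hc₂ hc₃ hM
  have hK : 0 ≤ (σ ^ 2)⁻¹ * M ^ 2 := by positivity
  refine ⟨(σ ^ 2)⁻¹ * M ^ 2 + L + 1, by positivity, fun t ht t' ht' => ?_,
    fun p hp q hq => ?_, fun p hp q hq => ?_⟩
  · exact (hsol.abs_sub_xi₁_le hd hc₂ hM ht ht').trans (by gcongr; linarith)
  · calc _ ≤ sliceModulus T d τ ξ₂ ξ₃ (dist p q) (T - d - τ) :=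
          (abs_sub_le_tailModulus hM.xi₂ hp hq hp.1.1 hq.1.1 le_rfl).trans
            (le_add_of_nonneg_right tailModulus_nonneg)
      _ ≤ _ := (hL _ dist_nonneg).trans (by gcongr; linarith)
  · calc _ ≤ sliceModulus T d τ ξ₂ ξ₃ (dist p q) (T - d - τ) :=
          (abs_sub_le_tailModulus hM.xi₃ hp hq hp.1.1 hq.1.1 le_rfl).trans
            (le_add_of_nonneg_left tailModulus_nonneg)
      _ ≤ _ := (hL _ dist_nonneg).trans (by gcongr; linarith)

end FirstSlice

theorem stmt_5_general (b σ d T τ : ℝ) (hd : 0 < d) (hτ0 : 0 < τ)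
    (ξ₁ : ℝ → ℝ) (ξ₂ : ℝ → ℝ → ℝ) (ξ₃ : ℝ → ℝ → ℝ → ℝ)
    (hc2 : ContinuousOn (fun p : ℝ × ℝ => ξ₂ p.1 p.2)
      (Icc (T - d - τ) (T - d) ×ˢ Icc (-d) 0))
    (hc3 : ContinuousOn (fun p : ℝ × ℝ × ℝ => ξ₃ p.1 p.2.1 p.2.2)
      (Icc (T - d - τ) (T - d) ×ˢ Icc (-d) 0 ×ˢ Icc (-d) 0))
    (hsol : isSolutionOn b σ T d τ ξ₁ ξ₂ ξ₃) :
    ∃ L : ℝ, 0 < L ∧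
      (∀ t ∈ Icc (T - d - τ) (T - d), ∀ t' ∈ Icc (T - d - τ) (T - d),
        |ξ₁ t - ξ₁ t'| ≤ L * |t - t'|) ∧
      (∀ s ∈ Icc (-d) 0, ∀ t ∈ Icc (T - d - τ) (T - d), ∀ t' ∈ Icc (T - d - τ) (T - d),
        |ξ₂ t s - ξ₂ t' s| ≤ L * |t - t'|) ∧
      (∀ t ∈ Icc (T - d - τ) (T - d), ∀ s ∈ Icc (-d) 0, ∀ s' ∈ Icc (-d) 0,
        |ξ₂ t s - ξ₂ t s'| ≤ L * |s - s'|) ∧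
      (∀ s ∈ Icc (-d) 0, ∀ r ∈ Icc (-d) 0,
        ∀ t ∈ Icc (T - d - τ) (T - d), ∀ t' ∈ Icc (T - d - τ) (T - d),
        |ξ₃ t s r - ξ₃ t' s r| ≤ L * |t - t'|) ∧
      (∀ t ∈ Icc (T - d - τ) (T - d), ∀ r ∈ Icc (-d) 0,
        ∀ s ∈ Icc (-d) 0, ∀ s' ∈ Icc (-d) 0,
        |ξ₃ t s r - ξ₃ t s' r| ≤ L * |s - s'|) ∧
      (∀ t ∈ Icc (T - d - τ) (T - d), ∀ s ∈ Icc (-d) 0,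
        ∀ r ∈ Icc (-d) 0, ∀ r' ∈ Icc (-d) 0,
        |ξ₃ t s r - ξ₃ t s r'| ≤ L * |r - r'|) := by
  obtain ⟨L, hL, h₁, h₂, h₃⟩ := hsol.exists_lipschitz hd.le hτ0.le hc2 hc3
  refine ⟨L, hL, h₁, fun s hs t ht t' ht' => ?_, fun t ht s hs s' hs' => ?_,
    fun s hs r hr t ht t' ht' => ?_, fun t ht r hr s hs s' hs' => ?_,
    fun t ht s hs r hr r' hr' => ?_⟩
  · simpa [Prod.dist_eq, Real.dist_eq] using h₂ (t, s) ⟨ht, hs⟩ (t', s) ⟨ht', hs⟩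
  · simpa [Prod.dist_eq, Real.dist_eq] using h₂ (t, s) ⟨ht, hs⟩ (t, s') ⟨ht, hs'⟩
  · simpa [Prod.dist_eq, Real.dist_eq] using h₃ (t, s, r) ⟨ht, hs, hr⟩ (t', s, r) ⟨ht', hs, hr⟩
  · simpa [Prod.dist_eq, Real.dist_eq] using h₃ (t, s, r) ⟨ht, hs, hr⟩ (t, s', r) ⟨ht, hs', hr⟩
  · simpa [Prod.dist_eq, Real.dist_eq] using h₃ (t, s, r) ⟨ht, hs, hr⟩ (t, s, r') ⟨ht, hs, hr'⟩

/-- Any continuous solution of the first-slice integral system on `D_τ`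
is Lipschitz in each variable, with a common Lipschitz constant `L > 0`. -/
theorem stmt_5 (b σ d T τ : ℝ) (hσ : σ ≠ 0) (hd : 0 < d) (hT : 2 * d ≤ T)
    (hτ0 : 0 < τ) (hτ : τ ≤ d)
    (ξ₁ : ℝ → ℝ) (ξ₂ : ℝ → ℝ → ℝ) (ξ₃ : ℝ → ℝ → ℝ → ℝ)
    (hc1 : ContinuousOn ξ₁ (Icc (T - d - τ) (T - d)))
    (hc2 : ContinuousOn (fun p : ℝ × ℝ => ξ₂ p.1 p.2)
      (Icc (T - d - τ) (T - d) ×ˢ Icc (-d) 0))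
    (hc3 : ContinuousOn (fun p : ℝ × ℝ × ℝ => ξ₃ p.1 p.2.1 p.2.2)
      (Icc (T - d - τ) (T - d) ×ˢ Icc (-d) 0 ×ˢ Icc (-d) 0))
    (hsol : isSolutionOn b σ T d τ ξ₁ ξ₂ ξ₃) :
    ∃ L : ℝ, 0 < L ∧
      (∀ t ∈ Icc (T - d - τ) (T - d), ∀ t' ∈ Icc (T - d - τ) (T - d),
        |ξ₁ t - ξ₁ t'| ≤ L * |t - t'|) ∧
      (∀ s ∈ Icc (-d) 0, ∀ t ∈ Icc (T - d - τ) (T - d), ∀ t' ∈ Icc (T - d - τ) (T - d),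
        |ξ₂ t s - ξ₂ t' s| ≤ L * |t - t'|) ∧
      (∀ t ∈ Icc (T - d - τ) (T - d), ∀ s ∈ Icc (-d) 0, ∀ s' ∈ Icc (-d) 0,
        |ξ₂ t s - ξ₂ t s'| ≤ L * |s - s'|) ∧
      (∀ s ∈ Icc (-d) 0, ∀ r ∈ Icc (-d) 0,
        ∀ t ∈ Icc (T - d - τ) (T - d), ∀ t' ∈ Icc (T - d - τ) (T - d),
        |ξ₃ t s r - ξ₃ t' s r| ≤ L * |t - t'|) ∧
      (∀ t ∈ Icc (T - d - τ) (T - d), ∀ r ∈ Icc (-d) 0,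
        ∀ s ∈ Icc (-d) 0, ∀ s' ∈ Icc (-d) 0,
        |ξ₃ t s r - ξ₃ t s' r| ≤ L * |s - s'|) ∧
      (∀ t ∈ Icc (T - d - τ) (T - d), ∀ s ∈ Icc (-d) 0,
        ∀ r ∈ Icc (-d) 0, ∀ r' ∈ Icc (-d) 0,
        |ξ₃ t s r - ξ₃ t s r'| ≤ L * |r - r'|) :=
  stmt_5_general b σ d T τ hd hτ0 ξ₁ ξ₂ ξ₃ hc2 hc3 hsol
end
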